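/- arXiv:2406.16883 — 5 statements merged into one kernel-verified Lean document; each statement's English description precedes it below -/
import Mathlib

section
/- Assume hypotheses (H1), (H2) and (H3). Then Θ has the fiber specification property: for every ε > 0 there exists m = m(ε) ∈ ℕ such that for every ω ∈ Ω and every m-spaced ω-specification (with intervals I₁,…,I_k ⊆ ℤ and map P_ω), there exists a point x ∈ M with d_M(P_ω(t), F_ω^t x) < ε for all t ∈ ⋃_{i=1}^k I_i; moreover m(ε) does not depend on ω or on the number k of intervals. -/
/-!
Fix a scale `β ≤ ε₀` and the bracket radius `δ` that (H2) provides for it. Compactness upgrades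
(H3) to a uniform time after which every fiber map sends a point `δ/2`-close to any `x` to a
point `δ/2`-close to any `y`.
After any long enough gap, a first bracket shadows the past of one orbit by a point whose image
lands near the start of the next segment, and a second bracket attaches the future of that
segment; by (H1) the past is moved by at most `2β e^{λt}` at time `t ≤ 0`. Attaching the segments
one at a time, the spacing makes these corrections decay geometrically along earlier segments,
so the accumulated error stays below `5β ≤ ε`.
-/

open Set Filter Topology MeasureTheory ENNReal NNReal

noncomputable section

namespace Paper

variable {Ω M : Type*} [MetricSpace Ω] [MetricSpace M]

/-- Fiber forward iterates `F_ω^n = F_{θ^{n-1}ω} ∘ ⋯ ∘ F_ω` as homeomorphisms. -/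
def fIterH (θ : Ω ≃ₜ Ω) (F : Ω → M ≃ₜ M) (ω : Ω) : ℕ → (M ≃ₜ M)
  | 0 => Homeomorph.refl M
  | n + 1 => (fIterH θ F ω n).trans (F ((⇑θ)^[n] ω))

/-- Fiber iterates `F_ω^t` for `t ∈ ℤ`, with `F_ω^{-n} = (F_{θ^{-n}ω}^n)⁻¹`. -/
def fIterZ (θ : Ω ≃ₜ Ω) (F : Ω → M ≃ₜ M) (ω : Ω) : ℤ → (M ≃ₜ M)
  | Int.ofNat n => fIterH θ F ω n
  | Int.negSucc n => (fIterH θ F ((⇑θ.symm)^[n + 1] ω) (n + 1)).symm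

/-- The iterates `θ^t` of the base homeomorphism, `t ∈ ℤ`. -/
def thIterZ (θ : Ω ≃ₜ Ω) : ℤ → Ω → Ω
  | Int.ofNat n => (⇑θ)^[n]
  | Int.negSucc n => (⇑θ.symm)^[n + 1]

/-- Local stable set `W^s_ε(ω,x)`. -/
def Ws (θ : Ω ≃ₜ Ω) (F : Ω → M ≃ₜ M) (ε : ℝ) (ω : Ω) (x : M) : Set M :=
  {y | ∀ n : ℕ, dist (fIterH θ F ω n x) (fIterH θ F ω n y) ≤ ε}

/-- Local unstable set `W^u_ε(ω,x)`. -/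
def Wu (θ : Ω ≃ₜ Ω) (F : Ω → M ≃ₜ M) (ε : ℝ) (ω : Ω) (x : M) : Set M :=
  {y | ∀ n : ℕ, dist (fIterZ θ F ω (-(n : ℤ)) x) (fIterZ θ F ω (-(n : ℤ)) y) ≤ ε}

section Cocycle

variable (θ : Ω ≃ₜ Ω) (F : Ω → M ≃ₜ M)

def skewProduct : Equiv.Perm (Ω × M) where
  toFun p := (θ p.1, F p.1 p.2)
  invFun p := (θ.symm p.1, (F (θ.symm p.1)).symm p.2)
  left_inv p := by simp
  right_inv p := by simp

lemma skewProduct_pow_apply (n : ℕ) (ω : Ω) (x : M) :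
    (skewProduct θ F ^ n) (ω, x) = ((⇑θ)^[n] ω, fIterH θ F ω n x) := by
  induction n with
  | zero => rfl
  | succ n ih =>
    rw [pow_succ', Equiv.Perm.mul_apply, ih, Function.iterate_succ_apply']
    rfl

lemma skewProduct_zpow_apply (t : ℤ) (ω : Ω) (x : M) :
    (skewProduct θ F ^ t) (ω, x) = (thIterZ θ t ω, fIterZ θ F ω t x) := by
  cases t with
  | ofNat n => exact skewProduct_pow_apply θ F n ω x
  | negSucc n =>
    rw [zpow_negSucc, Equiv.Perm.inv_eq_iff_eq, skewProduct_pow_apply]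
    simp only [thIterZ, fIterZ, Homeomorph.apply_symm_apply]
    rw [(Function.LeftInverse.iterate θ.apply_symm_apply (n + 1)) ω]

lemma skewProduct_zpow_add_apply (s t : ℤ) (p : Ω × M) :
    (skewProduct θ F ^ (s + t)) p = (skewProduct θ F ^ t) ((skewProduct θ F ^ s) p) := by
  rw [add_comm, zpow_add, Equiv.Perm.mul_apply]

lemma thIterZ_eq_zpow (t : ℤ) : thIterZ θ t = ⇑(θ.toEquiv ^ t) := by
  cases t with
  | ofNat n => exact (Equiv.Perm.coe_pow _ n).symm
  | negSucc n =>
    rw [zpow_negSucc, ← inv_pow, Equiv.Perm.coe_pow]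
    rfl

lemma thIterZ_add (s t : ℤ) (ω : Ω) : thIterZ θ (s + t) ω = thIterZ θ t (thIterZ θ s ω) := by
  rw [thIterZ_eq_zpow, thIterZ_eq_zpow, thIterZ_eq_zpow, add_comm, zpow_add, Equiv.Perm.mul_apply]

lemma fIterZ_add (ω : Ω) (s t : ℤ) (x : M) :
    fIterZ θ F ω (s + t) x = fIterZ θ F (thIterZ θ s ω) t (fIterZ θ F ω s x) := by
  simpa only [skewProduct_zpow_apply] using
    congrArg Prod.snd (skewProduct_zpow_add_apply θ F s t (ω, x))

lemma fIterZ_eq_fIterZ_sub (ω : Ω) (s t : ℤ) (x : M) :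
    fIterZ θ F ω t x = fIterZ θ F (thIterZ θ s ω) (t - s) (fIterZ θ F ω s x) := by
  simpa using fIterZ_add θ F ω s (t - s) x

lemma fIterZ_symm_apply (ω : Ω) (s t : ℤ) (z : M) :
    fIterZ θ F ω t ((fIterZ θ F ω s).symm z) = fIterZ θ F (thIterZ θ s ω) (t - s) z := by
  simpa using fIterZ_eq_fIterZ_sub θ F ω s t ((fIterZ θ F ω s).symm z)

end Cocycle

section Hyperbolicity

variable (θ : Ω ≃ₜ Ω) (F : Ω → M ≃ₜ M)

def StableContraction (ε lam : ℝ) : Prop :=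
  ∀ (ω : Ω) (x y : M), y ∈ Ws θ F ε ω x →
    ∀ n : ℕ, dist (fIterH θ F ω n x) (fIterH θ F ω n y) ≤ Real.exp (-(n : ℝ) * lam) * dist x y

def UnstableContraction (ε lam : ℝ) : Prop :=
  ∀ (ω : Ω) (x y : M), y ∈ Wu θ F ε ω x →
    ∀ n : ℕ, dist (fIterZ θ F ω (-(n : ℤ)) x) (fIterZ θ F ω (-(n : ℤ)) y) ≤
      Real.exp (-(n : ℝ) * lam) * dist x y

def LocalProductStructure (ε δ : ℝ) : Prop :=
  ∀ (ω : Ω) (x y : M), dist x y < δ → ∃ z : M, z ∈ Ws θ F ε ω x ∩ Wu θ F ε ω y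

variable {θ F}

lemma dist_le_of_mem_Ws {ε : ℝ} {ω : Ω} {x y : M} (hy : y ∈ Ws θ F ε ω x) {t : ℤ} (ht : 0 ≤ t) :
    dist (fIterZ θ F ω t x) (fIterZ θ F ω t y) ≤ ε := by
  lift t to ℕ using ht
  exact hy t

lemma dist_le_of_mem_Wu {ε : ℝ} {ω : Ω} {x y : M} (hy : y ∈ Wu θ F ε ω x) : dist x y ≤ ε :=
  hy 0

lemma UnstableContraction.dist_le {ε lam : ℝ} (h : UnstableContraction θ F ε lam) {ω : Ω}
    {x y : M} (hy : y ∈ Wu θ F ε ω x) {t : ℤ} (ht : t ≤ 0) :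
    dist (fIterZ θ F ω t x) (fIterZ θ F ω t y) ≤ Real.exp (t * lam) * dist x y := by
  obtain ⟨n, rfl⟩ := Int.exists_eq_neg_ofNat ht
  simpa using h ω x y hy n

end Hyperbolicity

theorem exists_uniform_mixing_time {ι : Type*} [CompactSpace M] (f : ι → ℕ → M → M)
    (hmix : ∀ U V : Set M, IsOpen U → IsOpen V → U.Nonempty → V.Nonempty →
      ∃ N : ℕ, ∀ n : ℕ, N ≤ n → ∀ i : ι, (f i n '' U ∩ V).Nonempty)
    {r : ℝ} (hr : 0 < r) :
    ∃ N : ℕ, ∀ n : ℕ, N ≤ n → ∀ (i : ι) (x y : M), ∃ u, dist u x < r ∧ dist (f i n u) y < r := by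
  obtain ⟨C, -, hC, hcover⟩ := finite_cover_balls_of_compact (isCompact_univ (X := M)) (half_pos hr)
  have hballs : ∀ᶠ n in atTop, ∀ c ∈ C, ∀ c' ∈ C, ∀ i : ι,
      (f i n '' Metric.ball c (r / 2) ∩ Metric.ball c' (r / 2)).Nonempty := by
    simp only [hC.eventually_all]
    intro c _ c' _
    obtain ⟨N, hN⟩ := hmix _ _ Metric.isOpen_ball Metric.isOpen_ball
      (Metric.nonempty_ball.2 (half_pos hr)) (Metric.nonempty_ball.2 (half_pos hr))
    exact eventually_atTop.2 ⟨N, hN⟩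
  obtain ⟨N, hN⟩ := eventually_atTop.1 hballs
  refine ⟨N, fun n hn i x y => ?_⟩
  obtain ⟨c, hc, hxc⟩ := mem_iUnion₂.1 (hcover (mem_univ x))
  obtain ⟨c', hc', hyc'⟩ := mem_iUnion₂.1 (hcover (mem_univ y))
  obtain ⟨_, ⟨u, huc, rfl⟩, hfu⟩ := hN n hn c hc c' hc' i
  rw [Metric.mem_ball] at hxc hyc' huc hfu
  exact ⟨u, by linarith [dist_triangle_right u x c], by linarith [dist_triangle_right (f i n u) y c']⟩

def HasConnectingPoints (θ : Ω ≃ₜ Ω) (F : Ω → M ≃ₜ M) (β lam : ℝ) (m : ℕ) : Prop :=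
  ∀ (ω : Ω) (x p : M) (n : ℕ), m ≤ n → ∃ z : M,
    (∀ t : ℤ, t ≤ 0 →
      dist (fIterZ θ F ω t x) (fIterZ θ F ω t z) ≤ 2 * β * Real.exp (t * lam)) ∧
    ∀ t : ℤ, n ≤ t → dist (fIterZ θ F (thIterZ θ n ω) (t - n) p) (fIterZ θ F ω t z) ≤ β

theorem hasConnectingPoints {θ : Ω ≃ₜ Ω} {F : Ω → M ≃ₜ M} {β δ lam : ℝ} {m : ℕ}
    (hs : StableContraction θ F β lam) (hu : UnstableContraction θ F β lam)
    (hprod : LocalProductStructure θ F β δ) (hlam : 0 ≤ lam)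
    (hmix : ∀ n : ℕ, m ≤ n → ∀ (ω : Ω) (x y : M),
      ∃ u, dist u x < δ / 2 ∧ dist (fIterH θ F ω n u) y < δ / 2)
    (hm : Real.exp (-(m : ℝ) * lam) * β < δ / 2) :
    HasConnectingPoints θ F β lam m := by
  intro ω x p n hmn
  obtain ⟨u, hux, hup⟩ := hmix n hmn ω x p
  obtain ⟨w, hws, hwu⟩ := hprod ω u x (by linarith [dist_nonneg (x := u) (y := x)])
  set v := fIterZ θ F ω n w
  have hvp : dist p v < δ := by
    have hexp : Real.exp (-(n : ℝ) * lam) ≤ Real.exp (-(m : ℝ) * lam) := by gcongr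
    have huw : dist (fIterH θ F ω n u) v ≤ Real.exp (-(m : ℝ) * lam) * β :=
      (hs ω u w hws n).trans (mul_le_mul hexp (hws 0) dist_nonneg (Real.exp_nonneg _))
    linarith [dist_triangle_left p v (fIterH θ F ω n u)]
  obtain ⟨z, hzs, hzu⟩ := hprod (thIterZ θ n ω) p v hvp
  refine ⟨(fIterZ θ F ω n).symm z, fun t ht => ?_, fun t ht => ?_⟩
  · have hxw := hu.dist_le hwu ht
    have hwz := hu.dist_le hzu (show t - n ≤ 0 by omega)
    rw [← fIterZ_eq_fIterZ_sub] at hwz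
    rw [fIterZ_symm_apply]
    have hexp : Real.exp ((t - n : ℤ) * lam) ≤ Real.exp (t * lam) := by
      gcongr
      linarith
    calc dist (fIterZ θ F ω t x) (fIterZ θ F (thIterZ θ n ω) (t - n) z)
        ≤ dist (fIterZ θ F ω t x) (fIterZ θ F ω t w)
          + dist (fIterZ θ F ω t w) (fIterZ θ F (thIterZ θ n ω) (t - n) z) := dist_triangle _ _ _
      _ ≤ Real.exp (t * lam) * β + Real.exp (t * lam) * β := by
        gcongr
        · exact hxw.trans (mul_le_mul_of_nonneg_left (dist_le_of_mem_Wu hwu) (Real.exp_nonneg _))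
        · exact hwz.trans (mul_le_mul hexp (dist_le_of_mem_Wu hzu) dist_nonneg (Real.exp_nonneg _))
      _ = 2 * β * Real.exp (t * lam) := by ring
  · rw [fIterZ_symm_apply]
    exact dist_le_of_mem_Ws hzs (by omega)

lemma mul_le_sub_of_spaced {k m : ℕ} {a b : ℕ → ℤ} (hab : ∀ i, i < k → a i ≤ b i)
    (hspace : ∀ i, i + 1 < k → b i + (m : ℤ) < a (i + 1)) {i j : ℕ} (hji : j ≤ i) (hik : i < k) :
    (m : ℤ) * (i - j : ℕ) ≤ b i - b j := by
  induction i, hji using Nat.le_induction with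
  | base => simp
  | succ i hji ih =>
    have := ih (by omega)
    have := hspace i hik
    have := hab (i + 1) hik
    rw [Nat.sub_add_comm hji]
    push_cast
    linarith

lemma exp_mul_le_half_pow {lam : ℝ} {m d : ℕ} {s : ℤ} (hlam : 0 ≤ lam)
    (hm : Real.exp (-(m : ℝ) * lam) ≤ 1 / 2) (hs : s + m * d ≤ 0) :
    Real.exp (s * lam) ≤ (1 / 2) ^ d := by
  calc Real.exp (s * lam) ≤ Real.exp (d * (-(m : ℝ) * lam)) := by
        have : (s : ℝ) + m * d ≤ 0 := by exact_mod_cast hs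
        exact Real.exp_le_exp.2 (by nlinarith)
    _ = Real.exp (-(m : ℝ) * lam) ^ d := Real.exp_nat_mul _ _
    _ ≤ (1 / 2) ^ d := by gcongr

/-- Attaching segment `i + 1` moves the shadow of segment `j ≤ i` by at most `2β 2^{-(i-j)}`,
since segment `j` lies at least `m (i - j)` steps in the past of the junction. -/
theorem exists_shadowing_of_connecting {θ : Ω ≃ₜ Ω} {F : Ω → M ≃ₜ M} {β lam : ℝ} {m : ℕ}
    (hβ : 0 ≤ β) (hlam : 0 ≤ lam) (hm : Real.exp (-(m : ℝ) * lam) ≤ 1 / 2)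
    (hconn : HasConnectingPoints θ F β lam m)
    (ω : Ω) {k : ℕ} {a b : ℕ → ℤ} {P : ℤ → M} (hab : ∀ i, i < k → a i ≤ b i)
    (hspace : ∀ i, i + 1 < k → b i + (m : ℤ) < a (i + 1))
    (horb : ∀ i, i < k → ∀ t₁ t₂ : ℤ, a i ≤ t₁ → t₁ ≤ b i → a i ≤ t₂ → t₂ ≤ b i →
      fIterZ θ F (thIterZ θ t₁ ω) (t₂ - t₁) (P t₁) = P t₂) :
    ∀ i < k, ∃ x : M, ∀ j ≤ i, ∀ t : ℤ, a j ≤ t → t ≤ b j →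
      dist (P t) (fIterZ θ F ω t x) ≤ 5 * β - 4 * β * (1 / 2) ^ (i - j) := by
  intro i
  induction i with
  | zero =>
    intro hk
    refine ⟨(fIterZ θ F ω (a 0)).symm (P (a 0)), fun j hj t ht₁ ht₂ => ?_⟩
    obtain rfl : j = 0 := by omega
    rw [fIterZ_symm_apply, horb 0 hk (a 0) t le_rfl (hab 0 hk) ht₁ ht₂, dist_self]
    norm_num
    linarith
  | succ i ih =>
    intro hk
    obtain ⟨x, hx⟩ := ih (by omega)
    have hspaced := hspace i hk
    obtain ⟨n, hn⟩ : ∃ n : ℕ, a (i + 1) = b i + n := ⟨(a (i + 1) - b i).toNat, by omega⟩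
    obtain ⟨z, hpast, hfuture⟩ := hconn (thIterZ θ (b i) ω) (fIterZ θ F ω (b i) x) (P (a (i + 1)))
      n (by omega)
    refine ⟨(fIterZ θ F ω (b i)).symm z, fun j hj t ht₁ ht₂ => ?_⟩
    rw [fIterZ_symm_apply]
    rcases hj.lt_or_eq with hji | rfl
    · have hgaps := mul_le_sub_of_spaced hab hspace (Nat.le_of_lt_succ hji) (by omega)
      have : 0 ≤ (m : ℤ) * (i - j : ℕ) := by positivity
      have hdecay : Real.exp ((t - b i : ℤ) * lam) ≤ (1 / 2) ^ (i - j) :=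
        exp_mul_le_half_pow hlam hm (by linarith)
      have hmove := hpast (t - b i) (by linarith)
      rw [← fIterZ_eq_fIterZ_sub] at hmove
      calc dist (P t) (fIterZ θ F (thIterZ θ (b i) ω) (t - b i) z)
          ≤ dist (P t) (fIterZ θ F ω t x)
            + dist (fIterZ θ F ω t x) (fIterZ θ F (thIterZ θ (b i) ω) (t - b i) z) :=
            dist_triangle _ _ _
        _ ≤ (5 * β - 4 * β * (1 / 2) ^ (i - j)) + 2 * β * (1 / 2) ^ (i - j) := by
            gcongr
            · exact hx j (Nat.le_of_lt_succ hji) t ht₁ ht₂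
            · exact hmove.trans (by gcongr)
        _ = 5 * β - 4 * β * (1 / 2) ^ (i + 1 - j) := by
            rw [show i + 1 - j = i - j + 1 by omega, pow_succ]
            ring
    · have hnext := hfuture (t - b i) (by omega)
      rw [← thIterZ_add, ← hn, show t - b i - n = t - a (i + 1) by omega,
        horb (i + 1) hk _ t le_rfl (hab (i + 1) hk) ht₁ ht₂] at hnext
      simpa using hnext.trans (by linarith)

theorem fiber_specification_general
    [CompactSpace M]
    (θ : Ω ≃ₜ Ω) (F : Ω → M ≃ₜ M)
    (ε₀ lam : ℝ) (hε₀ : 0 < ε₀) (hlam : 0 < lam)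
    -- (H1), stable part
    (H1s : ∀ ε : ℝ, 0 < ε → ε ≤ ε₀ → ∀ (ω : Ω) (x y : M), y ∈ Ws θ F ε ω x →
      ∀ n : ℕ, dist (fIterH θ F ω n x) (fIterH θ F ω n y) ≤
        Real.exp (-(n : ℝ) * lam) * dist x y)
    -- (H1), unstable part
    (H1u : ∀ ε : ℝ, 0 < ε → ε ≤ ε₀ → ∀ (ω : Ω) (x y : M), y ∈ Wu θ F ε ω x →
      ∀ n : ℕ, dist (fIterZ θ F ω (-(n : ℤ)) x) (fIterZ θ F ω (-(n : ℤ)) y) ≤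
        Real.exp (-(n : ℝ) * lam) * dist x y)
    -- (H2), local product structure
    (H2 : ∀ ε : ℝ, 0 < ε → ε ≤ ε₀ → ∃ δ : ℝ, 0 < δ ∧ δ < ε ∧
      ∀ (ω : Ω) (x y : M), dist x y < δ → ∃! z : M, z ∈ Ws θ F ε ω x ∩ Wu θ F ε ω y)
    -- (H3), topological mixing on fibers
    (H3 : ∀ U V : Set M, IsOpen U → IsOpen V → U.Nonempty → V.Nonempty →
      ∃ N : ℕ, ∀ n : ℕ, N ≤ n → ∀ ω : Ω,
        ((fun z => fIterH θ F ω n z) '' U ∩ V).Nonempty) :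
    ∀ ε : ℝ, 0 < ε → ∃ m : ℕ,
      ∀ (ω : Ω) (k : ℕ) (a b : ℕ → ℤ) (Pω : ℤ → M),
        0 < k →
        -- the intervals are nonempty
        (∀ i, i < k → a i ≤ b i) →
        -- the specification is m-spaced: a (i+1) > b i + m
        (∀ i, i + 1 < k → b i + (m : ℤ) < a (i + 1)) →
        -- Pω is an orbit segment on each interval:
        -- F_{θ^{t₁}ω}^{t₂ - t₁} (Pω t₁) = Pω t₂ for t₁, t₂ in the same interval
        (∀ i, i < k → ∀ t₁ t₂ : ℤ, a i ≤ t₁ → t₁ ≤ b i → a i ≤ t₂ → t₂ ≤ b i →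
          fIterZ θ F (thIterZ θ t₁ ω) (t₂ - t₁) (Pω t₁) = Pω t₂) →
        -- shadowing point
        ∃ x : M, ∀ i, i < k → ∀ t : ℤ, a i ≤ t → t ≤ b i →
          dist (Pω t) (fIterZ θ F ω t x) < ε := by
  intro ε hε
  obtain ⟨β, hβ, hβε₀, hβε⟩ : ∃ β, 0 < β ∧ β ≤ ε₀ ∧ 5 * β ≤ ε :=
    ⟨min ε ε₀ / 5, by positivity, by linarith [min_le_right ε ε₀], by linarith [min_le_left ε ε₀]⟩
  obtain ⟨δ, hδ, -, hprod⟩ := H2 β hβ hβε₀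
  obtain ⟨N, hN⟩ := exists_uniform_mixing_time (fun ω n z => fIterH θ F ω n z) H3 (half_pos hδ)
  have hdecay : Tendsto (fun n : ℕ => Real.exp (-(n : ℝ) * lam)) atTop (𝓝 0) := by
    simpa only [neg_mul, ← Real.exp_nat_mul, mul_neg] using
      tendsto_pow_atTop_nhds_zero_of_lt_one (Real.exp_nonneg (-lam))
        (Real.exp_lt_one_iff.2 (neg_neg_of_pos hlam))
  obtain ⟨m, hNm, hm, hmδ⟩ := ((eventually_ge_atTop N).and
    ((hdecay.eventually (gt_mem_nhds one_half_pos)).and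
      (hdecay.eventually (gt_mem_nhds (div_pos (half_pos hδ) hβ))))).exists
  have hconn : HasConnectingPoints θ F β lam m :=
    hasConnectingPoints (H1s β hβ hβε₀) (H1u β hβ hβε₀) (fun ω x y h => (hprod ω x y h).exists)
      hlam.le (fun n hn => hN n (hNm.trans hn)) ((lt_div_iff₀ hβ).1 hmδ)
  refine ⟨m, fun ω k a b P hk hab hspace horb => ?_⟩
  obtain ⟨x, hx⟩ := exists_shadowing_of_connecting hβ.le hlam.le hm.le hconn ω hab hspace horb
    (k - 1) (by omega)
  refine ⟨x, fun i hi t ht₁ ht₂ => (hx i (by omega) t ht₁ ht₂).trans_lt ?_⟩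
  have : 0 < 4 * β * (1 / 2 : ℝ) ^ (k - 1 - i) := by positivity
  linarith

/-- under (H1),(H2),(H3), the skew product has the fiber specification
property: for every `ε > 0` there is `m = m(ε)` (independent of `ω` and of the number
`k` of intervals) such that every `m`-spaced `ω`-specification, given by intervals
`[a i, b i] ⊆ ℤ` (`i < k`) and a map `Pω` which is an orbit segment on each interval,
is `(ω,ε)`-shadowed by some point `x ∈ M`. -/
theorem fiber_specification
    [CompactSpace Ω] [CompactSpace M]
    (θ : Ω ≃ₜ Ω) (F : Ω → M ≃ₜ M)
    (hF : Continuous fun p : Ω × M => F p.1 p.2)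
    (ε₀ lam : ℝ) (hε₀ : 0 < ε₀) (hlam : 0 < lam)
    -- (H1), stable part
    (H1s : ∀ ε : ℝ, 0 < ε → ε ≤ ε₀ → ∀ (ω : Ω) (x y : M), y ∈ Ws θ F ε ω x →
      ∀ n : ℕ, dist (fIterH θ F ω n x) (fIterH θ F ω n y) ≤
        Real.exp (-(n : ℝ) * lam) * dist x y)
    -- (H1), unstable part
    (H1u : ∀ ε : ℝ, 0 < ε → ε ≤ ε₀ → ∀ (ω : Ω) (x y : M), y ∈ Wu θ F ε ω x →
      ∀ n : ℕ, dist (fIterZ θ F ω (-(n : ℤ)) x) (fIterZ θ F ω (-(n : ℤ)) y) ≤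
        Real.exp (-(n : ℝ) * lam) * dist x y)
    -- (H2), local product structure
    (H2 : ∀ ε : ℝ, 0 < ε → ε ≤ ε₀ → ∃ δ : ℝ, 0 < δ ∧ δ < ε ∧
      ∀ (ω : Ω) (x y : M), dist x y < δ → ∃! z : M, z ∈ Ws θ F ε ω x ∩ Wu θ F ε ω y)
    -- (H3), topological mixing on fibers
    (H3 : ∀ U V : Set M, IsOpen U → IsOpen V → U.Nonempty → V.Nonempty →
      ∃ N : ℕ, ∀ n : ℕ, N ≤ n → ∀ ω : Ω,
        ((fun z => fIterH θ F ω n z) '' U ∩ V).Nonempty) :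
    ∀ ε : ℝ, 0 < ε → ∃ m : ℕ,
      ∀ (ω : Ω) (k : ℕ) (a b : ℕ → ℤ) (Pω : ℤ → M),
        0 < k →
        -- the intervals are nonempty
        (∀ i, i < k → a i ≤ b i) →
        -- the specification is m-spaced: a (i+1) > b i + m
        (∀ i, i + 1 < k → b i + (m : ℤ) < a (i + 1)) →
        -- Pω is an orbit segment on each interval:
        -- F_{θ^{t₁}ω}^{t₂ - t₁} (Pω t₁) = Pω t₂ for t₁, t₂ in the same interval
        (∀ i, i < k → ∀ t₁ t₂ : ℤ, a i ≤ t₁ → t₁ ≤ b i → a i ≤ t₂ → t₂ ≤ b i →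
          fIterZ θ F (thIterZ θ t₁ ω) (t₂ - t₁) (Pω t₁) = Pω t₂) →
        -- shadowing point
        ∃ x : M, ∀ i, i < k → ∀ t : ℤ, a i ≤ t → t ≤ b i →
          dist (Pω t) (fIterZ θ F ω t x) < ε :=
  fiber_specification_general θ F ε₀ lam hε₀ hlam H1s H1u H2 H3

end Paper
end
end

section
/- Assume hypotheses (H1), (H2) and (H3). Then for every ε > 0 there exists N ∈ ℕ such that for all ω ∈ Ω, all k ≥ 1, all points x₀,x₁,…,x_k ∈ M and all integers b₀ < a₁ ≤ b₁ < a₂ ≤ b₂ < ⋯ < a_k ≤ b_k < a_{k+1} satisfying a₁ ≥ b₀ + N, a_{i+1} ≥ b_i + N for i = 1,…,k, there exists z ∈ M such that: (i) d_M(F_ω^j x_i, F_ω^j z) ≤ ε for every i ∈ {1,…,k} and every integer j with a_i ≤ j ≤ b_i; (ii) d_M(F_ω^j x₀, F_ω^j z) ≤ ε for every integer j ≥ a_{k+1}; and (iii) d_M(F_ω^j x₀, F_ω^j z) ≤ ε for every integer j ≤ b₀. (This is the specification property of Gundlach–Kifer, holding here for every ω with N independent of ω and k.) -/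
open Set Filter Topology MeasureTheory ENNReal NNReal

noncomputable section

namespace Paper

variable {Ω M : Type*} [MetricSpace Ω] [MetricSpace M]

/-!
Uniform mixing and the local product structure let one glue the past of an orbit to the future of
another: given `p` at time `s` and `P` at time `t ≥ s + N`, take `u` near `p` whose image at time
`t` is near `P`, bracket `P` with that image, pull the bracket back to time `s`, and bracket it
with `p`. The resulting orbit follows `p` before time `s`, and by exponential contraction along
stable sets it approaches the orbit of `P` after time `t`, gaining a factor `1/2` every `N` steps.
Gluing the segments from the last one backwards, each gluing perturbs the later segments by an
amount that decays geometrically with their distance, so every segment is shadowed within `5η`,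
whatever the number of segments.
-/

lemma exp_neg_mul_le_half_pow {lam : ℝ} {N d m : ℕ} (hlam : 0 ≤ lam)
    (hN : Real.exp (-(N : ℝ) * lam) ≤ 1 / 2) (hm : N * d ≤ m) :
    Real.exp (-(m : ℝ) * lam) ≤ (1 / 2) ^ d := by
  have hm' : (N : ℝ) * d ≤ m := by exact_mod_cast hm
  calc Real.exp (-(m : ℝ) * lam) ≤ Real.exp (-(N : ℝ) * lam) ^ d := by
        rw [← Real.exp_nat_mul]
        exact Real.exp_le_exp.mpr (by nlinarith)
    _ ≤ (1 / 2) ^ d := pow_le_pow_left₀ (Real.exp_nonneg _) hN d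

lemma eventually_exp_neg_mul_le {lam r : ℝ} (hlam : 0 < lam) (hr : 0 < r) :
    ∀ᶠ n : ℕ in atTop, Real.exp (-(n : ℝ) * lam) ≤ r := by
  have hlim : Tendsto (fun n : ℕ => Real.exp (-(n : ℝ) * lam)) atTop (𝓝 0) := by
    simp only [neg_mul]
    exact Real.tendsto_exp_atBot.comp
      (tendsto_neg_atTop_atBot.comp (tendsto_natCast_atTop_atTop.atTop_mul_const hlam))
  exact hlim.eventually (ge_mem_nhds hr)

section Cocycle

variable (θ : Ω ≃ₜ Ω) (F : Ω → M ≃ₜ M)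

lemma thIterZ_succ (t : ℤ) (ω : Ω) : thIterZ θ (t + 1) ω = θ (thIterZ θ t ω) := by
  rcases t with n | _ | n
  · exact Function.iterate_succ_apply' _ _ _
  · exact (θ.apply_symm_apply ω).symm
  · exact (θ.apply_symm_apply _).symm.trans (congrArg θ (Function.iterate_succ_apply' _ _ _).symm)

lemma fIterH_succ' (ω : Ω) (n : ℕ) :
    fIterH θ F ω (n + 1) = (F ω).trans (fIterH θ F (θ ω) n) := by
  induction n with
  | zero => rfl
  | succ n ih =>
    ext x
    change F _ (fIterH θ F ω (n + 1) x) = F _ (fIterH θ F (θ ω) n (F ω x))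
    rw [ih, Function.iterate_succ_apply]
    rfl

lemma fIterZ_succ (t : ℤ) (ω : Ω) (x : M) :
    fIterZ θ F ω (t + 1) x = F (thIterZ θ t ω) (fIterZ θ F ω t x) := by
  rcases t with n | _ | n
  · rfl
  · exact ((F _).apply_symm_apply x).symm
  · change (fIterH θ F _ (n + 1)).symm x
      = F ((⇑θ.symm)^[n + 2] ω) ((fIterH θ F ((⇑θ.symm)^[n + 2] ω) (n + 1 + 1)).symm x)
    rw [fIterH_succ' θ F _ (n + 1), Homeomorph.symm_trans_apply, Homeomorph.apply_symm_apply,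
      Function.iterate_succ_apply' _ (n + 1), θ.apply_symm_apply]

end Cocycle

section Orbits

variable (θ : Ω ≃ₜ Ω) (F : Ω → M ≃ₜ M)

def orbitThrough (ω : Ω) (s : ℤ) (w : M) (j : ℤ) : M :=
  fIterZ θ F (thIterZ θ s ω) (j - s) w

lemma orbitThrough_zero (ω : Ω) (w : M) (j : ℤ) :
    orbitThrough θ F ω 0 w j = fIterZ θ F ω j w := by
  rw [orbitThrough, sub_zero]; rfl

lemma orbitThrough_orbitThrough (ω : Ω) (s t j : ℤ) (w : M) :
    orbitThrough θ F ω t (orbitThrough θ F ω s w t) j = orbitThrough θ F ω s w j := by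
  rw [orbitThrough, orbitThrough, orbitThrough, ← sub_add_sub_cancel j t s, add_comm (j - t),
    fIterZ_add, ← thIterZ_add, add_sub_cancel]

lemma orbitThrough_self (ω : Ω) (s : ℤ) (w : M) : orbitThrough θ F ω s w s = w := by
  rw [orbitThrough, sub_self]; rfl

lemma fIterZ_eq_orbitThrough (ω : Ω) (s j : ℤ) (x : M) :
    fIterZ θ F ω j x = orbitThrough θ F ω s (fIterZ θ F ω s x) j := by
  rw [← orbitThrough_zero, ← orbitThrough_zero, orbitThrough_orbitThrough]

lemma orbitThrough_add_natCast (ω : Ω) (s : ℤ) (w : M) (n : ℕ) :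
    orbitThrough θ F ω s w (s + n) = fIterH θ F (thIterZ θ s ω) n w := by
  rw [orbitThrough, add_sub_cancel_left]; rfl

lemma orbitThrough_sub_natCast (ω : Ω) (s : ℤ) (w : M) (n : ℕ) :
    orbitThrough θ F ω s w (s - n) = fIterZ θ F (thIterZ θ s ω) (-n) w := by
  rw [orbitThrough, sub_sub_cancel_left]

end Orbits

section Gluing

variable (θ : Ω ≃ₜ Ω) (F : Ω → M ≃ₜ M)

def ContractsWs (η lam : ℝ) : Prop :=
  ∀ (ω : Ω) (x y : M), y ∈ Ws θ F η ω x →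
    ∀ n : ℕ, dist (fIterH θ F ω n x) (fIterH θ F ω n y) ≤ Real.exp (-(n : ℝ) * lam) * dist x y

def ContractsWu (η lam : ℝ) : Prop :=
  ∀ (ω : Ω) (x y : M), y ∈ Wu θ F η ω x →
    ∀ n : ℕ, dist (fIterZ θ F ω (-(n : ℤ)) x) (fIterZ θ F ω (-(n : ℤ)) y) ≤
      Real.exp (-(n : ℝ) * lam) * dist x y

def MixesAt (δ : ℝ) (n : ℕ) : Prop :=
  ∀ (ω : Ω) (p P : M), ∃ u : M, dist u p < δ ∧ dist (fIterH θ F ω n u) P < δ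

/-- The orbit through `q` at time `s` follows that of `p` up to time `s` and approaches that of `P`
from time `t` on, gaining a factor `1/2` every `N` steps. -/
def GluesWithGap (η : ℝ) (N : ℕ) : Prop :=
  ∀ (ω : Ω) (s t : ℤ), s + N ≤ t → ∀ p P : M, ∃ q : M,
    (∀ j ≤ s, dist (orbitThrough θ F ω s p j) (orbitThrough θ F ω s q j) ≤ η) ∧
    ∀ (d : ℕ) (j : ℤ), t + N * d ≤ j →
      dist (orbitThrough θ F ω t P j) (orbitThrough θ F ω s q j) ≤ 2 * η * (1 / 2) ^ d

variable {θ F}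

lemma dist_orbitThrough_add_le {η lam : ℝ} (hs : ContractsWs θ F η lam) {ω : Ω} {s : ℤ}
    {w q : M} (hq : q ∈ Ws θ F η (thIterZ θ s ω) w) (n : ℕ) :
    dist (orbitThrough θ F ω s w (s + n)) (orbitThrough θ F ω s q (s + n)) ≤
      Real.exp (-(n : ℝ) * lam) * η := by
  rw [orbitThrough_add_natCast, orbitThrough_add_natCast]
  exact (hs _ _ _ hq n).trans (mul_le_mul_of_nonneg_left (hq 0) (Real.exp_nonneg _))

lemma dist_orbitThrough_sub_le {η lam : ℝ} (hu : ContractsWu θ F η lam) {ω : Ω} {s : ℤ}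
    {w q : M} (hq : q ∈ Wu θ F η (thIterZ θ s ω) w) (n : ℕ) :
    dist (orbitThrough θ F ω s w (s - n)) (orbitThrough θ F ω s q (s - n)) ≤
      Real.exp (-(n : ℝ) * lam) * η := by
  rw [orbitThrough_sub_natCast, orbitThrough_sub_natCast]
  exact (hu _ _ _ hq n).trans (mul_le_mul_of_nonneg_left (hq 0) (Real.exp_nonneg _))

lemma eventually_mixesAt [CompactSpace M]
    (H3 : ∀ U V : Set M, IsOpen U → IsOpen V → U.Nonempty → V.Nonempty →
      ∃ N : ℕ, ∀ n : ℕ, N ≤ n → ∀ ω : Ω, ((fun z => fIterH θ F ω n z) '' U ∩ V).Nonempty)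
    {δ : ℝ} (hδ : 0 < δ) :
    ∀ᶠ n : ℕ in atTop, MixesAt θ F δ n := by
  obtain ⟨C, -, hC, hcover⟩ := finite_cover_balls_of_compact (isCompact_univ (X := M)) (half_pos hδ)
  have hpairs : ∀ c ∈ C ×ˢ C, ∀ᶠ n : ℕ in atTop, ∀ ω : Ω,
      ((fun z => fIterH θ F ω n z) '' Metric.ball c.1 (δ / 2) ∩ Metric.ball c.2 (δ / 2)).Nonempty :=
    fun c _ => eventually_atTop.2 (H3 _ _ Metric.isOpen_ball Metric.isOpen_ball
      (Metric.nonempty_ball.2 (half_pos hδ)) (Metric.nonempty_ball.2 (half_pos hδ)))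
  filter_upwards [(eventually_all_finite (hC.prod hC)).2 hpairs] with n hn ω p P
  obtain ⟨c, hc, hpc⟩ := mem_iUnion₂.1 (hcover (mem_univ p))
  obtain ⟨c', hc', hPc'⟩ := mem_iUnion₂.1 (hcover (mem_univ P))
  obtain ⟨-, ⟨u, hu, rfl⟩, hu'⟩ := hn (c, c') ⟨hc, hc'⟩ ω
  refine ⟨u, ?_, ?_⟩
  · linarith [dist_triangle_right u p c, Metric.mem_ball.1 hu, Metric.mem_ball.1 hpc]
  · linarith [dist_triangle_right (fIterH θ F ω n u) P c', Metric.mem_ball.1 hu',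
      Metric.mem_ball.1 hPc']

lemma gluesWithGap_of_mixesAt {η δ lam : ℝ} {N : ℕ} (hs : ContractsWs θ F η lam)
    (hu : ContractsWu θ F η lam)
    (hbracket : ∀ (ω : Ω) (x y : M), dist x y < δ → (Ws θ F η ω x ∩ Wu θ F η ω y).Nonempty)
    (hmix : ∀ n : ℕ, N ≤ n → MixesAt θ F (δ / 2) n)
    (hlam : 0 ≤ lam) (hhalf : Real.exp (-(N : ℝ) * lam) ≤ 1 / 2)
    (hsmall : η * Real.exp (-(N : ℝ) * lam) ≤ δ / 2) :
    GluesWithGap θ F η N := by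
  intro ω s t hst p P
  obtain ⟨n, rfl⟩ : ∃ n : ℕ, t = s + n := ⟨(t - s).toNat, by omega⟩
  have hNn : N ≤ n := by omega
  obtain ⟨u, hup, huP⟩ := hmix n hNn (thIterZ θ s ω) p P
  rw [← orbitThrough_add_natCast] at huP
  obtain ⟨v, hvP, hvw⟩ := hbracket (thIterZ θ (s + n) ω) P (orbitThrough θ F ω s u (s + n))
    (by rw [dist_comm]; linarith [dist_nonneg (x := u) (y := p)])
  have hη : 0 ≤ η := dist_nonneg.trans (hvP 0)
  have huu' : dist u (orbitThrough θ F ω (s + n) v s) ≤ δ / 2 :=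
    calc _ ≤ Real.exp (-(n : ℝ) * lam) * η := by
          simpa only [add_sub_cancel_right, orbitThrough_orbitThrough, orbitThrough_self] using
            dist_orbitThrough_sub_le hu hvw n
      _ ≤ Real.exp (-(N : ℝ) * lam) * η := by gcongr
      _ ≤ δ / 2 := by linarith
  obtain ⟨q, hqu', hqp⟩ := hbracket (thIterZ θ s ω) (orbitThrough θ F ω (s + n) v s) p
    (by linarith [dist_triangle_left (orbitThrough θ F ω (s + n) v s) p u])
  refine ⟨q, fun j hj => ?_, fun d j hj => ?_⟩
  · obtain ⟨m, rfl⟩ : ∃ m : ℕ, j = s - m := ⟨(s - j).toNat, by omega⟩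
    rw [orbitThrough_sub_natCast, orbitThrough_sub_natCast]
    exact hqp m
  · have hNd : (0 : ℤ) ≤ N * d := by positivity
    obtain ⟨m, rfl⟩ : ∃ m : ℕ, j = s + n + m := ⟨(j - (s + n)).toNat, by omega⟩
    have hdm : N * d ≤ m := Nat.cast_le.1 (by push_cast; linarith : ((N * d : ℕ) : ℤ) ≤ m)
    have hPv := dist_orbitThrough_add_le hs hvP m
    have hu'q := dist_orbitThrough_add_le hs hqu' (n + m)
    rw [Nat.cast_add, ← add_assoc, orbitThrough_orbitThrough] at hu'q
    have e1 := exp_neg_mul_le_half_pow hlam hhalf hdm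
    have e2 := exp_neg_mul_le_half_pow hlam hhalf (hdm.trans (Nat.le_add_left m n))
    calc _ ≤ _ := dist_triangle _ (orbitThrough θ F ω (s + n) v (s + n + m)) _
      _ ≤ Real.exp (-(m : ℝ) * lam) * η + Real.exp (-((n + m : ℕ) : ℝ) * lam) * η :=
          add_le_add hPv hu'q
      _ ≤ 2 * η * (1 / 2) ^ d := by nlinarith

lemma exists_gluesWithGap {η δ lam : ℝ} (hη : 0 < η) (hδ : 0 < δ) (hlam : 0 < lam)
    (hs : ContractsWs θ F η lam) (hu : ContractsWu θ F η lam)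
    (hbracket : ∀ (ω : Ω) (x y : M), dist x y < δ → (Ws θ F η ω x ∩ Wu θ F η ω y).Nonempty)
    (hmix : ∀ᶠ n : ℕ in atTop, MixesAt θ F (δ / 2) n) :
    ∃ N : ℕ, GluesWithGap θ F η N := by
  obtain ⟨N, hN⟩ := eventually_atTop.1 (hmix.and
    (eventually_exp_neg_mul_le hlam (lt_min one_half_pos (by positivity : 0 < δ / (2 * η)))))
  have hsmall : η * Real.exp (-(N : ℝ) * lam) ≤ δ / 2 := by
    have h := (hN N le_rfl).2.trans (min_le_right _ _)
    rw [le_div_iff₀ (by positivity)] at h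
    linarith
  exact ⟨N, gluesWithGap_of_mixesAt hs hu hbracket (fun n hn => (hN n hn).1) hlam.le
    ((hN N le_rfl).2.trans (min_le_left _ _)) hsmall⟩

end Gluing


section Specification

variable {θ : Ω ≃ₜ Ω} {F : Ω → M ≃ₜ M}

lemma add_mul_le_of_spaced {N k : ℕ} {a b : ℕ → ℤ} (hab : ∀ i, 1 ≤ i → i ≤ k → a i ≤ b i)
    (hgap : ∀ i, i ≤ k → b i + N ≤ a (i + 1)) {l : ℕ} (hl : 1 ≤ l) :
    ∀ d, l + d ≤ k + 1 → a l + N * d ≤ a (l + d) := by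
  intro d
  induction d with
  | zero => simp
  | succ d ih =>
    intro hd
    have hprev := ih (by omega)
    have hseg := hab (l + d) (by omega) (by omega)
    have hnext := hgap (l + d) (by omega)
    rw [← add_assoc]
    push_cast
    linarith

variable (θ F) in
/-- The orbit through `q` at time `c` shadows `x m` on `[a m, b m]` for `l ≤ m ≤ k`, and on
`[a (k + 1), ∞)` for `m = k + 1`, with error `η + 2η (1 + 1/2 + ⋯ + (1/2) ^ (m - l - 1))`. -/
def ShadowsFrom (ω : Ω) (x : ℕ → M) (a b : ℕ → ℤ) (k : ℕ) (η : ℝ) (l : ℕ) (c : ℤ) (q : M) :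
    Prop :=
  ∀ m, l ≤ m → m ≤ k + 1 → ∀ j, a m ≤ j → (m ≤ k → j ≤ b m) →
    dist (fIterZ θ F ω j (x m)) (orbitThrough θ F ω c q j) ≤ 5 * η - 4 * η * (1 / 2) ^ (m - l)

variable {ω : Ω} {x : ℕ → M} {a b : ℕ → ℤ} {k : ℕ} {η : ℝ}

lemma ShadowsFrom.rebase {l : ℕ} {c : ℤ} {q : M}
    (h : ShadowsFrom θ F ω x a b k η l c q) (c' : ℤ) :
    ShadowsFrom θ F ω x a b k η l c' (orbitThrough θ F ω c q c') := by
  intro m hlm hmk j hj hjb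
  rw [orbitThrough_orbitThrough]
  exact h m hlm hmk j hj hjb

lemma ShadowsFrom.exists_glue {N : ℕ} (hglue : GluesWithGap θ F η N)
    (hab : ∀ i, 1 ≤ i → i ≤ k → a i ≤ b i) (hgap : ∀ i, i ≤ k → b i + N ≤ a (i + 1))
    {i : ℕ} (hi : i ≤ k) {P : M} (hP : ShadowsFrom θ F ω x a b k η (i + 1) (a (i + 1)) P) :
    ∃ q : M, (∀ j ≤ b i, dist (fIterZ θ F ω j (x i)) (orbitThrough θ F ω (b i) q j) ≤ η) ∧
      ShadowsFrom θ F ω x a b k η i (b i) q := by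
  obtain ⟨q, hback, hfwd⟩ := hglue ω (b i) (a (i + 1)) (hgap i hi) (fIterZ θ F ω (b i) (x i)) P
  have hpast : ∀ j ≤ b i, dist (fIterZ θ F ω j (x i)) (orbitThrough θ F ω (b i) q j) ≤ η := by
    intro j hj
    rw [fIterZ_eq_orbitThrough θ F ω (b i)]
    exact hback j hj
  refine ⟨q, hpast, fun m him hmk j hjm hjb => ?_⟩
  rcases him.eq_or_lt with rfl | him
  · rw [Nat.sub_self, pow_zero]
    linarith [hpast j (hjb (by omega))]
  obtain ⟨d, rfl⟩ := Nat.exists_eq_add_of_lt him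
  have hprev := hP (i + d + 1) (by omega) hmk j hjm hjb
  have hspaced := add_mul_le_of_spaced hab hgap (Nat.le_add_left 1 i) d (by omega)
  rw [add_right_comm] at hspaced
  have hnew := hfwd d j (by linarith)
  rw [show i + d + 1 - (i + 1) = d by omega] at hprev
  rw [show i + d + 1 - i = d + 1 by omega, pow_succ]
  linarith [dist_triangle (fIterZ θ F ω j (x (i + d + 1))) (orbitThrough θ F ω (a (i + 1)) P j)
    (orbitThrough θ F ω (b i) q j)]

lemma exists_shadowsFrom {N : ℕ} (hglue : GluesWithGap θ F η N) (hη : 0 ≤ η)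
    (hab : ∀ i, 1 ≤ i → i ≤ k → a i ≤ b i) (hgap : ∀ i, i ≤ k → b i + N ≤ a (i + 1))
    (i : ℕ) (hi : i ≤ k) :
    ∃ q : M, (∀ j ≤ b i, dist (fIterZ θ F ω j (x i)) (orbitThrough θ F ω (b i) q j) ≤ η) ∧
      ShadowsFrom θ F ω x a b k η i (b i) q := by
  induction hc : k - i generalizing i with
  | zero =>
    obtain rfl : i = k := by omega
    refine ShadowsFrom.exists_glue hglue hab hgap hi
      (P := fIterZ θ F ω (a (i + 1)) (x (i + 1))) fun m hm hmk j _ _ => ?_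
    obtain rfl : m = i + 1 := by omega
    rw [← fIterZ_eq_orbitThrough, dist_self, Nat.sub_self, pow_zero]
    linarith
  | succ c ih =>
    obtain ⟨q, -, hq⟩ := ih (i + 1) (by omega) (by omega)
    exact ShadowsFrom.exists_glue hglue hab hgap hi (hq.rebase (a (i + 1)))

end Specification

theorem gundlach_kifer_specification_general
    [CompactSpace M]
    (θ : Ω ≃ₜ Ω) (F : Ω → M ≃ₜ M)
    (ε₀ lam : ℝ) (hε₀ : 0 < ε₀) (hlam : 0 < lam)
    -- (H1), stable part
    (H1s : ∀ ε : ℝ, 0 < ε → ε ≤ ε₀ → ∀ (ω : Ω) (x y : M), y ∈ Ws θ F ε ω x →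
      ∀ n : ℕ, dist (fIterH θ F ω n x) (fIterH θ F ω n y) ≤
        Real.exp (-(n : ℝ) * lam) * dist x y)
    -- (H1), unstable part
    (H1u : ∀ ε : ℝ, 0 < ε → ε ≤ ε₀ → ∀ (ω : Ω) (x y : M), y ∈ Wu θ F ε ω x →
      ∀ n : ℕ, dist (fIterZ θ F ω (-(n : ℤ)) x) (fIterZ θ F ω (-(n : ℤ)) y) ≤
        Real.exp (-(n : ℝ) * lam) * dist x y)
    -- (H2), local product structure
    (H2 : ∀ ε : ℝ, 0 < ε → ε ≤ ε₀ → ∃ δ : ℝ, 0 < δ ∧ δ < ε ∧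
      ∀ (ω : Ω) (x y : M), dist x y < δ → ∃! z : M, z ∈ Ws θ F ε ω x ∩ Wu θ F ε ω y)
    -- (H3), topological mixing on fibers
    (H3 : ∀ U V : Set M, IsOpen U → IsOpen V → U.Nonempty → V.Nonempty →
      ∃ N : ℕ, ∀ n : ℕ, N ≤ n → ∀ ω : Ω,
        ((fun z => fIterH θ F ω n z) '' U ∩ V).Nonempty) :
    ∀ ε : ℝ, 0 < ε → ∃ N : ℕ,
      ∀ (ω : Ω) (k : ℕ), 1 ≤ k → ∀ (x : ℕ → M) (a b : ℕ → ℤ),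
        -- ordering: b₀ < a₁ ≤ b₁ < a₂ ≤ ⋯ ≤ b_k < a_{k+1}
        (∀ i, 1 ≤ i → i ≤ k → a i ≤ b i) →
        (∀ i, i ≤ k → b i < a (i + 1)) →
        -- spacing: a_{i+1} ≥ b_i + N for i = 0,…,k
        (∀ i, i ≤ k → b i + (N : ℤ) ≤ a (i + 1)) →
        ∃ z : M,
          (∀ i, 1 ≤ i → i ≤ k → ∀ j : ℤ, a i ≤ j → j ≤ b i →
            dist (fIterZ θ F ω j (x i)) (fIterZ θ F ω j z) ≤ ε) ∧
          (∀ j : ℤ, a (k + 1) ≤ j →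
            dist (fIterZ θ F ω j (x 0)) (fIterZ θ F ω j z) ≤ ε) ∧
          (∀ j : ℤ, j ≤ b 0 →
            dist (fIterZ θ F ω j (x 0)) (fIterZ θ F ω j z) ≤ ε) := by
  intro ε hε
  obtain ⟨η, hη, hηε₀, hηε⟩ : ∃ η, 0 < η ∧ η ≤ ε₀ ∧ 5 * η ≤ ε :=
    ⟨min ε ε₀ / 5, by positivity, by linarith [min_le_right ε ε₀], by linarith [min_le_left ε ε₀]⟩
  obtain ⟨δ, hδ, -, hbracket⟩ := H2 η hη hηε₀
  obtain ⟨N, hglue⟩ := exists_gluesWithGap hη hδ hlam (H1s η hη hηε₀) (H1u η hη hηε₀)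
    (fun ω x y h => (hbracket ω x y h).exists) (eventually_mixesAt H3 (half_pos hδ))
  refine ⟨N, fun ω k _ x a b hab _ hgap => ?_⟩
  -- the half-line `[a (k + 1), ∞)` is an extra segment, on which `x 0` is to be shadowed
  obtain ⟨q, hback, hshadow⟩ := exists_shadowsFrom (ω := ω)
    (x := Function.update x (k + 1) (x 0)) hglue hη.le hab hgap 0 (Nat.zero_le k)
  have horbit (j : ℤ) :
      fIterZ θ F ω j (orbitThrough θ F ω (b 0) q 0) = orbitThrough θ F ω (b 0) q j := by
    rw [← orbitThrough_zero, orbitThrough_orbitThrough]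
  refine ⟨orbitThrough θ F ω (b 0) q 0, fun i hi hik j hij hjb => ?_, fun j hj => ?_,
    fun j hj => ?_⟩
  · have h := hshadow i (Nat.zero_le i) (by omega) j hij fun _ => hjb
    rw [Function.update_of_ne (by omega), Nat.sub_zero] at h
    rw [horbit]
    linarith [(by positivity : 0 ≤ 4 * η * (1 / 2 : ℝ) ^ i)]
  · have h := hshadow (k + 1) (Nat.zero_le _) le_rfl j hj (fun h => absurd h (by omega))
    rw [Function.update_self, Nat.sub_zero] at h
    rw [horbit]
    linarith [(by positivity : 0 ≤ 4 * η * (1 / 2 : ℝ) ^ (k + 1))]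
  · have h := hback j hj
    rw [Function.update_of_ne (by omega)] at h
    rw [horbit]
    linarith

/-- under (H1),(H2),(H3), the Gundlach–Kifer specification property holds
for every `ω`, with the gap `N` independent of `ω` and of `k`. -/
theorem gundlach_kifer_specification
    [CompactSpace Ω] [CompactSpace M]
    (θ : Ω ≃ₜ Ω) (F : Ω → M ≃ₜ M)
    (hF : Continuous fun p : Ω × M => F p.1 p.2)
    (ε₀ lam : ℝ) (hε₀ : 0 < ε₀) (hlam : 0 < lam)
    -- (H1), stable part
    (H1s : ∀ ε : ℝ, 0 < ε → ε ≤ ε₀ → ∀ (ω : Ω) (x y : M), y ∈ Ws θ F ε ω x →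
      ∀ n : ℕ, dist (fIterH θ F ω n x) (fIterH θ F ω n y) ≤
        Real.exp (-(n : ℝ) * lam) * dist x y)
    -- (H1), unstable part
    (H1u : ∀ ε : ℝ, 0 < ε → ε ≤ ε₀ → ∀ (ω : Ω) (x y : M), y ∈ Wu θ F ε ω x →
      ∀ n : ℕ, dist (fIterZ θ F ω (-(n : ℤ)) x) (fIterZ θ F ω (-(n : ℤ)) y) ≤
        Real.exp (-(n : ℝ) * lam) * dist x y)
    -- (H2), local product structure
    (H2 : ∀ ε : ℝ, 0 < ε → ε ≤ ε₀ → ∃ δ : ℝ, 0 < δ ∧ δ < ε ∧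
      ∀ (ω : Ω) (x y : M), dist x y < δ → ∃! z : M, z ∈ Ws θ F ε ω x ∩ Wu θ F ε ω y)
    -- (H3), topological mixing on fibers
    (H3 : ∀ U V : Set M, IsOpen U → IsOpen V → U.Nonempty → V.Nonempty →
      ∃ N : ℕ, ∀ n : ℕ, N ≤ n → ∀ ω : Ω,
        ((fun z => fIterH θ F ω n z) '' U ∩ V).Nonempty) :
    ∀ ε : ℝ, 0 < ε → ∃ N : ℕ,
      ∀ (ω : Ω) (k : ℕ), 1 ≤ k → ∀ (x : ℕ → M) (a b : ℕ → ℤ),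
        -- ordering: b₀ < a₁ ≤ b₁ < a₂ ≤ ⋯ ≤ b_k < a_{k+1}
        (∀ i, 1 ≤ i → i ≤ k → a i ≤ b i) →
        (∀ i, i ≤ k → b i < a (i + 1)) →
        -- spacing: a_{i+1} ≥ b_i + N for i = 0,…,k
        (∀ i, i ≤ k → b i + (N : ℤ) ≤ a (i + 1)) →
        ∃ z : M,
          (∀ i, 1 ≤ i → i ≤ k → ∀ j : ℤ, a i ≤ j → j ≤ b i →
            dist (fIterZ θ F ω j (x i)) (fIterZ θ F ω j z) ≤ ε) ∧
          (∀ j : ℤ, a (k + 1) ≤ j →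
            dist (fIterZ θ F ω j (x 0)) (fIterZ θ F ω j z) ≤ ε) ∧
          (∀ j : ℤ, j ≤ b 0 →
            dist (fIterZ θ F ω j (x 0)) (fIterZ θ F ω j z) ≤ ε) :=
  gundlach_kifer_specification_general θ F ε₀ lam hε₀ hlam H1s H1u H2 H3

end Paper
end
end

section
/- Let P be a θ-invariant ergodic Borel probability measure on Ω, φ : Ω×M → ℝ continuous and α ∈ ℝ. Then K_{φ,α} is a Θ-invariant Borel subset of Ω×M, the set Ω_α := {ω ∈ Ω : K_{φ,α}(ω) ≠ ∅} is measurable with respect to the P-completion of the Borel σ-algebra of Ω, and either P(Ω_α) = 1 or P(Ω_α) = 0 (with P extended to its completion). -/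
/-!
The Birkhoff averages of a bounded function along the orbits of `p` and of `Θ p` differ by
`O(1/n)`, so `K_{φ,α}` is `Θ`-invariant; it is Borel as the convergence set of continuous
functions. Its projection `Ω_α` is then a continuous image of a Borel subset of the Polish space
`Ω × M`, i.e. an analytic set, and analytic sets are null measurable for every finite outer
regular measure: if `f : ℕ^ℕ → Ω` parametrises the set, bounding the coordinates one at a time
produces compact boxes whose images keep almost all of the outer measure. Since every fibre map
`F_ω` is onto, `Ω_α` is exactly `θ`-invariant, and ergodicity gives `P(Ω_α) ∈ {0, 1}`.
-/

open Set Filter Topology MeasureTheory ENNReal NNReal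

noncomputable section

namespace Paper

variable {Ω M : Type*} [MetricSpace Ω] [MetricSpace M]

/-- The skew product `Θ(ω,x) = (θω, F_ω x)`. -/
def skewH (θ : Ω ≃ₜ Ω) (F : Ω → M ≃ₜ M) : Ω × M → Ω × M :=
  fun p => (θ p.1, F p.1 p.2)

/-- The level set of the Birkhoff average:
`K_{φ,α} = {(ω,x) : (1/n) Σ_{i<n} φ(Θ^i(ω,x)) → α}`. -/
def Kset (θ : Ω ≃ₜ Ω) (F : Ω → M ≃ₜ M) (φ : Ω × M → ℝ) (α : ℝ) : Set (Ω × M) :=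
  {p | Tendsto (fun n : ℕ =>
    (∑ i ∈ Finset.range n, φ ((skewH θ F)^[i] p)) / (n : ℝ)) atTop (𝓝 α)}

end Paper

section AnalyticSet

theorem exists_pi_Iio_subset_of_isOpen {τ : ℕ → ℕ} {V : Set (ℕ → ℕ)} (hV : IsOpen V)
    (hτV : univ.pi (fun i => Iic (τ i)) ⊆ V) :
    ∃ k, (Iio k).pi (fun i => Iic (τ i)) ⊆ V := by
  have hcyl : ∀ y ∈ univ.pi (fun i => Iic (τ i)), ∃ n, PiNat.cylinder y n ⊆ V := by
    intro y hy
    obtain ⟨_, ⟨z, n, rfl⟩, hyz, hzV⟩ :=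
      (PiNat.isTopologicalBasis_cylinders fun _ => ℕ).exists_subset_of_mem_open (hτV hy) hV
    exact ⟨n, fun w hw => hzV fun i hi => (hw i hi).trans (hyz i hi)⟩
  choose! n hn using hcyl
  obtain ⟨t, htL, ht, hcover⟩ :=
    (isCompact_univ_pi fun i => (finite_Iic (τ i)).isCompact).elim_finite_subcover_image
      (fun y _ => PiNat.isOpen_cylinder _ y (n y))
      (fun y hy => mem_biUnion hy (PiNat.self_mem_cylinder y (n y)))
  refine ⟨ht.toFinset.sup n, fun x hx => ?_⟩
  -- truncating `x` at `τ` lands in the compact box without changing its first coordinates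
  have hr : (fun i => min (x i) (τ i)) ∈ univ.pi (fun i => Iic (τ i)) :=
    fun i _ => mem_Iic.mpr (min_le_right _ _)
  obtain ⟨y, hyt, hxy⟩ := mem_iUnion₂.mp (hcover hr)
  refine hn y (htL hyt) fun i hi => ?_
  have hik : i < ht.toFinset.sup n := hi.trans_le (Finset.le_sup (ht.mem_toFinset.mpr hyt))
  exact (min_eq_left (hx i hik)).symm.trans (hxy i hi)

variable {X : Type*} [MeasurableSpace X] {μ : Measure X}

theorem exists_lt_measure_image_inter_le (f : (ℕ → ℕ) → X) {A : Set (ℕ → ℕ)} {r : ℝ≥0∞}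
    (hr : r < μ (f '' A)) (k : ℕ) : ∃ m, r < μ (f '' (A ∩ {x | x k ≤ m})) := by
  have hmono : Monotone fun m => f '' (A ∩ {x | x k ≤ m}) := fun a b hab =>
    image_mono (inter_subset_inter_right _ fun x hx => le_trans hx hab)
  have hunion : ⋃ m, f '' (A ∩ {x | x k ≤ m}) = f '' A := by
    rw [← image_iUnion, ← inter_iUnion,
      inter_eq_left.mpr fun x _ => mem_iUnion.mpr ⟨x k, le_refl (x k)⟩]
  rwa [← hunion, hmono.measure_iUnion, lt_iSup_iff] at hr

theorem exists_isCompact_subset_range_le_measure [TopologicalSpace X] [μ.OuterRegular]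
    {f : (ℕ → ℕ) → X} (hf : Continuous f) {r : ℝ≥0∞} (hr : r < μ (range f)) :
    ∃ K, IsCompact K ∧ K ⊆ range f ∧ r ≤ μ K := by
  have step (A : Set (ℕ → ℕ)) (k : ℕ) :
      ∃ m, r < μ (f '' A) → r < μ (f '' (A ∩ {x | x k ≤ m})) := by
    by_cases hA : r < μ (f '' A)
    · exact (exists_lt_measure_image_inter_le f hA k).imp fun _ h _ => h
    · exact ⟨0, fun h => absurd h hA⟩
  choose m hm using step
  -- bound the coordinates one at a time, keeping the measure of the image above `r`
  let A : ℕ → Set (ℕ → ℕ) := fun k => Nat.rec univ (fun k Ak => Ak ∩ {x | x k ≤ m Ak k}) k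
  let τ : ℕ → ℕ := fun k => m (A k) k
  have hA (k : ℕ) : r < μ (f '' A k) := by
    induction k with
    | zero => simpa [A] using hr
    | succ k ih => exact hm _ _ ih
  have hAτ (k : ℕ) : A k ⊆ (Iio k).pi fun i => Iic (τ i) := by
    induction k with
    | zero => simp
    | succ k ih =>
      rintro x ⟨hxA, hxk⟩ i (hi : i < k + 1)
      rcases (Nat.lt_succ_iff_lt_or_eq.mp hi) with hi | rfl
      · exact ih hxA i hi
      · exact hxk
  refine ⟨f '' univ.pi fun i => Iic (τ i),
    (isCompact_univ_pi fun i => (finite_Iic (τ i)).isCompact).image hf,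
    image_subset_range _ _, ?_⟩
  by_contra! hlt
  obtain ⟨U, hKU, hU, hUr⟩ := (f '' univ.pi fun i => Iic (τ i)).exists_isOpen_lt_of_lt r hlt
  obtain ⟨k, hk⟩ := exists_pi_Iio_subset_of_isOpen (hU.preimage hf) (image_subset_iff.mp hKU)
  exact (hA k).not_ge (hUr.le.trans' (measure_mono (image_subset_iff.mpr ((hAτ k).trans hk))))

theorem nullMeasurableSet_of_forall_lt_exists_measurableSet_subset {s : Set X} (hs : μ s ≠ ∞)
    (h : ∀ r < μ s, ∃ t ⊆ s, MeasurableSet t ∧ r ≤ μ t) : NullMeasurableSet s μ := by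
  rcases eq_zero_or_pos (μ s) with hs0 | hs0
  · exact NullMeasurableSet.of_null hs0
  obtain ⟨u, -, hu, hu_lim⟩ := exists_seq_strictMono_tendsto' hs0
  choose t hts htm hut using fun n => h (u n) (hu n).2
  have hT : μ s ≤ μ (⋃ n, t n) :=
    le_of_tendsto' hu_lim fun n => (hut n).trans (measure_mono (subset_iUnion t n))
  exact (MeasurableSet.iUnion htm).nullMeasurableSet.congr
    (ae_eq_of_subset_of_measure_ge (iUnion_subset hts) hT
      (MeasurableSet.iUnion htm).nullMeasurableSet hs)

theorem MeasureTheory.AnalyticSet.nullMeasurableSet [TopologicalSpace X] [T2Space X]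
    [OpensMeasurableSpace X] (μ : Measure X) [IsFiniteMeasure μ] [μ.OuterRegular] {s : Set X}
    (hs : AnalyticSet s) : NullMeasurableSet s μ := by
  rw [AnalyticSet] at hs
  obtain rfl | ⟨f, hf, rfl⟩ := hs
  · exact nullMeasurableSet_empty
  refine nullMeasurableSet_of_forall_lt_exists_measurableSet_subset (measure_ne_top μ _)
    fun r hr => ?_
  obtain ⟨K, hK, hKf, hrK⟩ := exists_isCompact_subset_range_le_measure hf hr
  exact ⟨K, hKf, hK.measurableSet, hrK⟩

end AnalyticSet

section BirkhoffAverage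

variable {α E : Type*}

theorem preimage_setOf_tendsto_birkhoffAverage [NormedAddCommGroup E] [NormedSpace ℝ E]
    {g : α → E} (hg : Bornology.IsBounded (range g)) (f : α → α) (a : E) :
    f ⁻¹' {x | Tendsto (birkhoffAverage ℝ f g · x) atTop (𝓝 a)} =
      {x | Tendsto (birkhoffAverage ℝ f g · x) atTop (𝓝 a)} := by
  ext x
  refine tendsto_iff_of_dist ?_
  simpa [dist_eq_norm] using (tendsto_birkhoffAverage_apply_sub_birkhoffAverage' ℝ hg f x).norm

theorem measurable_birkhoffAverage [MeasurableSpace α] {f : α → α} {g : α → ℝ}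
    (hf : Measurable f) (hg : Measurable g) (n : ℕ) : Measurable (birkhoffAverage ℝ f g n) :=
  (Finset.measurable_sum _ fun k _ => hg.comp (hf.iterate k)).const_mul _

end BirkhoffAverage

section Ergodic

variable {α : Type*} [MeasurableSpace α] {f : α → α} {μ : Measure α} [IsProbabilityMeasure μ]

theorem ergodic_of_measure_eq_zero_or_one (hf : MeasurePreserving f μ μ)
    (h : ∀ s, MeasurableSet s → f ⁻¹' s = s → μ s = 0 ∨ μ s = 1) : Ergodic f μ where
  toMeasurePreserving := hf
  aeconst_set s hs hfs := by
    rw [eventuallyConst_set']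
    exact (h s hs hfs).imp ae_eq_empty.mpr fun h1 =>
      ae_eq_univ.mpr ((prob_compl_eq_zero_iff hs).mpr h1)

theorem QuasiErgodic.measure_eq_zero_or_one₀ (hf : QuasiErgodic f μ) {s : Set α}
    (hs : NullMeasurableSet s μ) (hfs : f ⁻¹' s = s) : μ s = 0 ∨ μ s = 1 :=
  (hf.ae_empty_or_univ₀ hs hfs.eventuallyEq).imp (fun h => by simp [measure_congr h])
    fun h => by simp [measure_congr h]

end Ergodic

namespace Paper

variable {Ω M : Type*} [MetricSpace Ω] [MetricSpace M]

theorem Kset_eq_setOf_tendsto_birkhoffAverage (θ : Ω ≃ₜ Ω) (F : Ω → M ≃ₜ M) (φ : Ω × M → ℝ)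
    (α : ℝ) :
    Kset θ F φ α = {p | Tendsto (birkhoffAverage ℝ (skewH θ F) φ · p) atTop (𝓝 α)} := by
  simp only [Kset, birkhoffAverage, birkhoffSum, smul_eq_mul, div_eq_inv_mul]

theorem preimage_image_fst_of_preimage_skewH_eq {θ : Ω ≃ₜ Ω} {F : Ω → M ≃ₜ M}
    {K : Set (Ω × M)} (hK : skewH θ F ⁻¹' K = K) : θ ⁻¹' (Prod.fst '' K) = Prod.fst '' K := by
  ext ω
  conv_rhs => rw [← hK]
  simp only [mem_preimage, mem_image, Prod.exists, exists_and_right, exists_eq_right, skewH]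
  rw [(F ω).surjective.exists]

/-- `K_{φ,α}` is a `Θ`-invariant Borel set, the set
`Ω_α = {ω : K_{φ,α}(ω) ≠ ∅}` is measurable for the `P`-completion of the Borel
σ-algebra, and `P(Ω_α) = 1` or `P(Ω_α) = 0`. -/
theorem level_set_invariant_and_zero_one
    [CompactSpace Ω] [CompactSpace M]
    [MeasurableSpace Ω] [BorelSpace Ω] [MeasurableSpace M] [BorelSpace M]
    (θ : Ω ≃ₜ Ω) (F : Ω → M ≃ₜ M)
    (hF : Continuous fun p : Ω × M => F p.1 p.2)
    (P : Measure Ω) [IsProbabilityMeasure P]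
    -- P is θ-invariant
    (hPinv : Measure.map (⇑θ) P = P)
    -- P is ergodic for θ
    (hPerg : ∀ A : Set Ω, MeasurableSet A → (⇑θ) ⁻¹' A = A → P A = 0 ∨ P A = 1)
    (φ : Ω × M → ℝ) (hφ : Continuous φ) (α : ℝ) :
    skewH θ F ⁻¹' Kset θ F φ α = Kset θ F φ α ∧
    MeasurableSet (Kset θ F φ α) ∧
    NullMeasurableSet {ω : Ω | ∃ x : M, (ω, x) ∈ Kset θ F φ α} P ∧
    (P {ω : Ω | ∃ x : M, (ω, x) ∈ Kset θ F φ α} = 1 ∨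
      P {ω : Ω | ∃ x : M, (ω, x) ∈ Kset θ F φ α} = 0) := by
  have hΘ : Continuous (skewH θ F) := (θ.continuous.comp continuous_fst).prodMk hF
  have hinv : skewH θ F ⁻¹' Kset θ F φ α = Kset θ F φ α := by
    rw [Kset_eq_setOf_tendsto_birkhoffAverage]
    exact preimage_setOf_tendsto_birkhoffAverage (isCompact_range hφ).isBounded _ α
  have hmeas : MeasurableSet (Kset θ F φ α) := by
    rw [Kset_eq_setOf_tendsto_birkhoffAverage]
    exact measurableSet_tendsto _ (measurable_birkhoffAverage hΘ.measurable hφ.measurable)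
  have hfst : {ω : Ω | ∃ x : M, (ω, x) ∈ Kset θ F φ α} = Prod.fst '' Kset θ F φ α := by
    ext ω
    simp
  have hnull : NullMeasurableSet (Prod.fst '' Kset θ F φ α) P :=
    (hmeas.analyticSet.image_of_continuous continuous_fst).nullMeasurableSet P
  have herg : Ergodic θ P :=
    ergodic_of_measure_eq_zero_or_one ⟨θ.continuous.measurable, hPinv⟩ hPerg
  rw [hfst]
  exact ⟨hinv, hmeas, hnull, (herg.quasiErgodic.measure_eq_zero_or_one₀ hnull
    (preimage_image_fst_of_preimage_skewH_eq hinv)).symm⟩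

end Paper
end
end

section
/- Let X be a compact metric space, T : X → X continuous, φ : X → ℝ continuous and α ∈ ℝ. Let (σ_k) be a sequence of Borel probability measures on X, (n_k) natural numbers with n_k → ∞, and (δ_k) positive reals with δ_k → 0, such that each σ_k gives full measure to the set {x ∈ X : |(1/n_k) Σ_{i=0}^{n_k−1} φ(T^i x) − α| ≤ δ_k}. If the measures μ_k := (1/n_k) Σ_{i=0}^{n_k−1} (T^i)_* σ_k converge to μ in the weak* topology, then μ is a T-invariant Borel probability measure and ∫_X φ dμ = α. -/
/-! Let `μ_k` be the empirical measures. For continuous `g` the difference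
`∫ g ∘ T dμ_k - ∫ g dμ_k` telescopes to `(∫ g ∘ T^[n_k] dσ_k - ∫ g dσ_k) / n_k = O(‖g‖∞ / n_k)`,
so the weak* limit satisfies `∫ g ∘ T dμ = ∫ g dμ`, and integrals of bounded continuous functions
determine a finite Borel measure. Testing against `1` shows `μ X = 1`, and `∫ φ dμ_k` is the
`σ_k`-integral of the Birkhoff average of `φ`, which is `δ_k`-close to `α` almost everywhere. -/

open Set Filter Topology MeasureTheory ENNReal NNReal

noncomputable section

open scoped BoundedContinuousFunction

namespace Paper

section Empirical

variable {X : Type*} [MeasurableSpace X]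

def empiricalMeasure (T : X → X) (σ : Measure X) (n : ℕ) : Measure X :=
  (n : ℝ≥0∞)⁻¹ • ∑ i ∈ Finset.range n, σ.map T^[i]

lemma isProbabilityMeasure_empiricalMeasure {T : X → X} (hT : Measurable T) (σ : Measure X)
    [IsProbabilityMeasure σ] {n : ℕ} (hn : n ≠ 0) :
    IsProbabilityMeasure (empiricalMeasure T σ n) := by
  constructor
  simp [empiricalMeasure, Measure.map_apply (hT.iterate _) MeasurableSet.univ,
    ENNReal.inv_mul_cancel (Nat.cast_ne_zero.2 hn) (natCast_ne_top n)]

variable [TopologicalSpace X] [BorelSpace X] [CompactSpace X]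

lemma _root_.Continuous.integrable_of_compactSpace {g : X → ℝ} (hg : Continuous g)
    (ν : Measure X) [IsFiniteMeasure ν] : Integrable g ν :=
  hg.integrable_of_hasCompactSupport (HasCompactSupport.of_compactSpace g)

lemma integral_empiricalMeasure {T : X → X} (hT : Continuous T) (σ : Measure X)
    [IsFiniteMeasure σ] {g : X → ℝ} (hg : Continuous g) (n : ℕ) :
    ∫ x, g x ∂empiricalMeasure T σ n = (∑ i ∈ Finset.range n, ∫ x, g (T^[i] x) ∂σ) / n := by
  rw [empiricalMeasure, integral_smul_measure, integral_finsetSum_measure, toReal_inv,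
    toReal_natCast, smul_eq_mul, inv_mul_eq_div]
  · simp only [integral_map (hT.iterate _).aemeasurable hg.aestronglyMeasurable]
  · intro i _
    have := Measure.isFiniteMeasure_map σ T^[i]
    exact hg.integrable_of_compactSpace _

lemma integral_comp_sub_integral_empiricalMeasure {T : X → X} (hT : Continuous T)
    (σ : Measure X) [IsFiniteMeasure σ] {g : X → ℝ} (hg : Continuous g) (n : ℕ) :
    ∫ x, g (T x) ∂empiricalMeasure T σ n - ∫ x, g x ∂empiricalMeasure T σ n =
      (∫ x, g (T^[n] x) ∂σ - ∫ x, g x ∂σ) / n := by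
  rw [integral_empiricalMeasure hT σ (g := fun x => g (T x)) (hg.comp hT),
    integral_empiricalMeasure hT σ hg, div_sub_div_same, ← Finset.sum_sub_distrib]
  simp only [← Function.iterate_succ_apply' T, Finset.sum_range_sub (fun i => ∫ x, g (T^[i] x) ∂σ),
    Function.iterate_zero_apply]

lemma norm_integral_comp_sub_integral_empiricalMeasure_le {T : X → X} (hT : Continuous T)
    (σ : Measure X) [IsProbabilityMeasure σ] {g : X → ℝ} (hg : Continuous g) {C : ℝ}
    (hC : ∀ x, ‖g x‖ ≤ C) (n : ℕ) :
    ‖∫ x, g (T x) ∂empiricalMeasure T σ n - ∫ x, g x ∂empiricalMeasure T σ n‖ ≤ 2 * C / n := by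
  have hbound : ∀ h : X → X, ‖∫ x, g (h x) ∂σ‖ ≤ C := fun h => by
    simpa using norm_integral_le_of_norm_le_const (μ := σ) (Eventually.of_forall fun x => hC (h x))
  rw [integral_comp_sub_integral_empiricalMeasure hT σ hg, norm_div, Real.norm_natCast]
  gcongr
  calc ‖∫ x, g (T^[n] x) ∂σ - ∫ x, g x ∂σ‖ ≤ ‖∫ x, g (T^[n] x) ∂σ‖ + ‖∫ x, g x ∂σ‖ :=
        norm_sub_le _ _
    _ ≤ C + C := add_le_add (hbound T^[n]) (hbound id)
    _ = 2 * C := (two_mul C).symm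

lemma tendsto_integral_comp_sub_integral_empiricalMeasure {ι : Type*} {l : Filter ι}
    {T : X → X} (hT : Continuous T) {σ : ι → Measure X} (hσ : ∀ k, IsProbabilityMeasure (σ k))
    {n : ι → ℕ} (hn : Tendsto n l atTop) {g : X → ℝ} (hg : Continuous g) :
    Tendsto (fun k => ∫ x, g (T x) ∂empiricalMeasure T (σ k) (n k) -
      ∫ x, g x ∂empiricalMeasure T (σ k) (n k)) l (𝓝 0) := by
  obtain ⟨C, hC⟩ := isCompact_univ.exists_bound_of_continuousOn hg.continuousOn
  refine squeeze_zero_norm (fun k => ?_)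
    ((tendsto_const_nhds (x := 2 * C)).div_atTop (tendsto_natCast_atTop_atTop.comp hn))
  exact norm_integral_comp_sub_integral_empiricalMeasure_le hT (σ k) hg
    (fun x => hC x (mem_univ x)) (n k)

lemma norm_integral_empiricalMeasure_sub_le {T : X → X} (hT : Continuous T) (σ : Measure X)
    [IsProbabilityMeasure σ] {φ : X → ℝ} (hφ : Continuous φ) {n : ℕ} {α δ : ℝ}
    (hfull : σ {x | |(∑ i ∈ Finset.range n, φ (T^[i] x)) / n - α| ≤ δ} = 1) :
    ‖∫ x, φ x ∂empiricalMeasure T σ n - α‖ ≤ δ := by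
  have hφi : ∀ i, Continuous fun x => φ (T^[i] x) := fun i => hφ.comp (hT.iterate i)
  have hA : Continuous fun x => (∑ i ∈ Finset.range n, φ (T^[i] x)) / n :=
    (continuous_finsetSum _ fun i _ => hφi i).div_const _
  have hae : ∀ᵐ x ∂σ, ‖(∑ i ∈ Finset.range n, φ (T^[i] x)) / n - α‖ ≤ δ := by
    rw [ae_iff_measure_eq, measure_univ]
    · exact hfull
    · exact (isClosed_le (hA.sub continuous_const).norm continuous_const).nullMeasurableSet
  have hint : ∫ x, φ x ∂empiricalMeasure T σ n - α =
      ∫ x, ((∑ i ∈ Finset.range n, φ (T^[i] x)) / n - α) ∂σ := by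
    rw [integral_sub (hA.integrable_of_compactSpace σ) (integrable_const α), integral_div,
      integral_finsetSum _ fun i _ => (hφi i).integrable_of_compactSpace σ,
      integral_empiricalMeasure hT σ hφ, integral_const, probReal_univ, one_smul]
  simpa [hint] using norm_integral_le_of_norm_le_const hae

end Empirical

lemma isProbabilityMeasure_of_tendsto_integral_one {X ι : Type*} [MeasurableSpace X]
    {l : Filter ι} [l.NeBot] {ν : ι → Measure X} (hν : ∀ᶠ k in l, IsProbabilityMeasure (ν k))
    {μ : Measure X} (h : Tendsto (fun k => ∫ _, (1 : ℝ) ∂ν k) l (𝓝 (∫ _, (1 : ℝ) ∂μ))) :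
    IsProbabilityMeasure μ := by
  have hν1 : ∀ᶠ k in l, ∫ _, (1 : ℝ) ∂ν k = 1 := hν.mono fun _ _ => by simp
  have hμ1 : μ.real univ = 1 := by
    simpa using tendsto_nhds_unique h (tendsto_const_nhds.congr' (hν1.mono fun _ => Eq.symm))
  exact ⟨(ENNReal.toReal_eq_one_iff _).mp hμ1⟩

lemma map_eq_of_forall_integral_comp_eq {X : Type*} [TopologicalSpace X] [MeasurableSpace X]
    [HasOuterApproxClosed X] [BorelSpace X] {μ : Measure X} [IsFiniteMeasure μ] {T : X → X}
    (hT : Continuous T) (h : ∀ g : X →ᵇ ℝ, ∫ x, g (T x) ∂μ = ∫ x, g x ∂μ) :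
    μ.map T = μ := by
  have := Measure.isFiniteMeasure_map μ T
  refine ext_of_forall_integral_eq_of_IsFiniteMeasure fun g => ?_
  rw [integral_map hT.aemeasurable g.continuous.aestronglyMeasurable, h]

theorem limit_of_empirical_measures_general
    {X : Type*} [MetricSpace X] [CompactSpace X] [MeasurableSpace X] [BorelSpace X]
    (T : X → X) (hT : Continuous T)
    (φ : X → ℝ) (hφ : Continuous φ) (α : ℝ)
    (σ : ℕ → Measure X) (hσ : ∀ k, IsProbabilityMeasure (σ k))
    (n : ℕ → ℕ) (hn : Tendsto n atTop atTop)
    (δ : ℕ → ℝ) (hδ : Tendsto δ atTop (𝓝 0))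
    -- σ_k gives full measure to the deviation set
    (hfull : ∀ k, σ k {x : X |
      |(∑ i ∈ Finset.range (n k), φ (T^[i] x)) / (n k : ℝ) - α| ≤ δ k} = 1)
    (μ : Measure X)
    -- weak* convergence of μ_k = (1/n_k) Σ_{i<n_k} (T^i)_* σ_k to μ:
    -- ∫ g dμ_k → ∫ g dμ for every continuous g
    (hconv : ∀ g : X → ℝ, Continuous g →
      Tendsto (fun k =>
        (∑ i ∈ Finset.range (n k), ∫ x, g (T^[i] x) ∂(σ k)) / (n k : ℝ))
        atTop (𝓝 (∫ x, g x ∂μ))) :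
    IsProbabilityMeasure μ ∧ Measure.map T μ = μ ∧ (∫ x, φ x ∂μ) = α := by
  set μk := fun k => empiricalMeasure T (σ k) (n k)
  have hlim : ∀ g : X → ℝ, Continuous g →
      Tendsto (fun k => ∫ x, g x ∂μk k) atTop (𝓝 (∫ x, g x ∂μ)) := fun g hg => by
    simpa only [μk, integral_empiricalMeasure hT _ hg] using hconv g hg
  have hμ : IsProbabilityMeasure μ :=
    isProbabilityMeasure_of_tendsto_integral_one ((hn.eventually_ne_atTop 0).mono fun k hk =>
      isProbabilityMeasure_empiricalMeasure hT.measurable (σ k) hk) (hlim _ continuous_const)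
  refine ⟨hμ, map_eq_of_forall_integral_comp_eq hT fun g => ?_, ?_⟩
  · have hg := g.continuous
    exact sub_eq_zero.mp <| tendsto_nhds_unique ((hlim _ (hg.comp hT)).sub (hlim g hg))
      (tendsto_integral_comp_sub_integral_empiricalMeasure hT hσ hn hg)
  · refine tendsto_nhds_unique (hlim φ hφ) (tendsto_iff_norm_sub_tendsto_zero.2 ?_)
    exact squeeze_zero (fun _ => norm_nonneg _)
      (fun k => norm_integral_empiricalMeasure_sub_le hT (σ k) hφ (hfull k)) hδ

/-- if the empirical measures `μ_k = (1/n_k) Σ_{i<n_k} (T^i)_* σ_k`,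
where each `σ_k` gives full measure to points whose Birkhoff average of `φ` up to
time `n_k` is `δ_k`-close to `α`, converge weak* to `μ`, then `μ` is a `T`-invariant
Borel probability measure with `∫ φ dμ = α`. -/
theorem limit_of_empirical_measures
    {X : Type*} [MetricSpace X] [CompactSpace X] [MeasurableSpace X] [BorelSpace X]
    (T : X → X) (hT : Continuous T)
    (φ : X → ℝ) (hφ : Continuous φ) (α : ℝ)
    (σ : ℕ → Measure X) (hσ : ∀ k, IsProbabilityMeasure (σ k))
    (n : ℕ → ℕ) (hn : Tendsto n atTop atTop)
    (δ : ℕ → ℝ) (hδpos : ∀ k, 0 < δ k) (hδ : Tendsto δ atTop (𝓝 0))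
    -- σ_k gives full measure to the deviation set
    (hfull : ∀ k, σ k {x : X |
      |(∑ i ∈ Finset.range (n k), φ (T^[i] x)) / (n k : ℝ) - α| ≤ δ k} = 1)
    (μ : Measure X)
    -- weak* convergence of μ_k = (1/n_k) Σ_{i<n_k} (T^i)_* σ_k to μ:
    -- ∫ g dμ_k → ∫ g dμ for every continuous g
    (hconv : ∀ g : X → ℝ, Continuous g →
      Tendsto (fun k =>
        (∑ i ∈ Finset.range (n k), ∫ x, g (T^[i] x) ∂(σ k)) / (n k : ℝ))
        atTop (𝓝 (∫ x, g x ∂μ))) :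
    IsProbabilityMeasure μ ∧ Measure.map T μ = μ ∧ (∫ x, φ x ∂μ) = α :=
  limit_of_empirical_measures_general T hT φ hφ α σ hσ n hn δ hδ hfull μ hconv

end Paper
end
end

section
/- Let Ω = AddCircle 1, M = AddCircle 1 × AddCircle 1 the unit 2-torus, α ∈ ℝ irrational, T : M → M an additive group automorphism that is a homeomorphism, and h : Ω → M continuous. Then the skew product Θ : Ω × M → Ω × M, Θ(ω,x) = (ω + α, T(x) + h(ω)), does not have the (classical) specification property. -/
/-!
The rotation `ω ↦ ω + α` is a factor of `Θ` through `Prod.fst`, which does not increase the sum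
metric. A rotation is an isometry, so if the orbit of `z` passes `ε`-close to `u` at time `0` and
`ε`-close to `R^[n] v` at time `n`, then `π z` is `ε`-close to both `u` and `v`, forcing
`dist u v < 2ε`. Specification demands such `z` for all `u, v` at a fixed `ε`, which fails once
`2ε` is less than the distance between two points of the circle.
-/

open Set Filter Topology MeasureTheory ENNReal NNReal

noncomputable section

namespace Paper

/-- The classical specification property of a map `g`, with respect to a distance
function `d` on `X`: for every `ε > 0` there is a gap `m` such that any finite family
of orbit segments, with consecutive time intervals spaced by more than `m`, is
`ε`-shadowed by the orbit of a single point. -/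
def ClassicalSpecification {X : Type*} (d : X → X → ℝ) (g : X → X) : Prop :=
  ∀ ε : ℝ, 0 < ε → ∃ m : ℕ, ∀ k : ℕ, 1 ≤ k → ∀ (y : ℕ → X) (a b : ℕ → ℕ),
    (∀ i, 1 ≤ i → i ≤ k → a i ≤ b i) →
    (∀ i, 1 ≤ i → i < k → b i + m < a (i + 1)) →
    ∃ z : X, ∀ i, 1 ≤ i → i ≤ k → ∀ j, a i ≤ j → j ≤ b i →
      d (g^[j] z) (g^[j - a i] (y i)) < ε

open Function

theorem ClassicalSpecification.exists_shadow_pair {X : Type*} {d : X → X → ℝ} {g : X → X}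
    (hg : ClassicalSpecification d g) {ε : ℝ} (hε : 0 < ε) :
    ∃ m : ℕ, ∀ x y : X, ∃ z : X, d z x < ε ∧ d (g^[m + 1] z) y < ε := by
  obtain ⟨m, hm⟩ := hg ε hε
  refine ⟨m, fun x y => ?_⟩
  let a : ℕ → ℕ := fun i => if i = 1 then 0 else m + 1
  obtain ⟨z, hz⟩ := hm 2 one_le_two (fun i => if i = 1 then x else y) a a (fun _ _ _ => le_rfl)
    (fun i hi₁ hi₂ => by
      obtain rfl : i = 1 := by omega
      simp [a])
  exact ⟨z, by simpa [a] using hz 1 le_rfl one_le_two 0 le_rfl le_rfl,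
    by simpa [a] using hz 2 one_le_two le_rfl (m + 1) le_rfl le_rfl⟩

theorem _root_.Isometry.iterate {Y : Type*} [PseudoEMetricSpace Y] {R : Y → Y} (hR : Isometry R)
    (n : ℕ) : Isometry R^[n] := by
  induction n with
  | zero => exact isometry_id
  | succ n ih => exact ih.comp hR

theorem not_classicalSpecification_of_isometric_factor {X Y : Type*} [MetricSpace Y]
    [Nontrivial Y] {d : X → X → ℝ} {g : X → X} {R : Y → Y} {π : X → Y} (hπ : Surjective π)
    (hd : ∀ p q, dist (π p) (π q) ≤ d p q) (hπgR : Semiconj π g R) (hR : Isometry R) :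
    ¬ ClassicalSpecification d g := by
  intro hg
  obtain ⟨u, v, huv⟩ := exists_pair_ne Y
  obtain ⟨m, hm⟩ := hg.exists_shadow_pair (half_pos (dist_pos.2 huv))
  obtain ⟨x, rfl⟩ := hπ u
  obtain ⟨y, hy⟩ := hπ (R^[m + 1] v)
  obtain ⟨z, hzx, hzy⟩ := hm x y
  have hz_near_v : dist (π z) v < dist (π x) v / 2 :=
    calc dist (π z) v = dist (R^[m + 1] (π z)) (R^[m + 1] v) := ((hR.iterate _).dist_eq _ _).symm
      _ = dist (π (g^[m + 1] z)) (π y) := by rw [(hπgR.iterate_right _).eq, hy]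
      _ ≤ d (g^[m + 1] z) y := hd _ _
      _ < dist (π x) v / 2 := hzy
  have hz_near_x : dist (π x) (π z) < dist (π x) v / 2 := by
    rw [dist_comm]; exact (hd z x).trans_lt hzx
  linarith [dist_triangle (π x) (π z) v]

theorem _root_.AddCircle.nontrivial {p : ℝ} (hp : p ≠ 0) : Nontrivial (AddCircle p) :=
  nontrivial_of_ne ((p / 2 : ℝ) : AddCircle p) 0 fun h => by
    simpa [hp] using (AddCircle.norm_half_period_eq p).symm.trans (congrArg norm h)

theorem skew_product_no_specification_general
    (α : ℝ)
    (T : (AddCircle (1 : ℝ) × AddCircle (1 : ℝ)) ≃+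
         (AddCircle (1 : ℝ) × AddCircle (1 : ℝ)))
    (h : AddCircle (1 : ℝ) → AddCircle (1 : ℝ) × AddCircle (1 : ℝ)) :
    ¬ ClassicalSpecification
        (fun p q : AddCircle (1 : ℝ) × (AddCircle (1 : ℝ) × AddCircle (1 : ℝ)) =>
          dist p.1 q.1 + dist p.2 q.2)
        (fun p => (p.1 + ((α : ℝ) : AddCircle (1 : ℝ)), T p.2 + h p.1)) := by
  have := AddCircle.nontrivial one_ne_zero
  exact not_classicalSpecification_of_isometric_factor (R := (· + (α : AddCircle (1 : ℝ))))
    Prod.fst_surjective (fun _ _ => le_add_of_nonneg_right dist_nonneg) (fun _ => rfl)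
    (isometry_add_right _)

/-- the skew product `Θ(ω,x) = (ω + α, T x + h ω)` on
`𝕋 × 𝕋²` (with the sum metric on the product) does not have the classical
specification property. -/
theorem skew_product_no_specification
    (α : ℝ) (hα : Irrational α)
    (T : (AddCircle (1 : ℝ) × AddCircle (1 : ℝ)) ≃+
         (AddCircle (1 : ℝ) × AddCircle (1 : ℝ)))
    (hT : Continuous ⇑T) (hTsymm : Continuous ⇑T.symm)
    (h : AddCircle (1 : ℝ) → AddCircle (1 : ℝ) × AddCircle (1 : ℝ))
    (hh : Continuous h) :
    ¬ ClassicalSpecification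
        (fun p q : AddCircle (1 : ℝ) × (AddCircle (1 : ℝ) × AddCircle (1 : ℝ)) =>
          dist p.1 q.1 + dist p.2 q.2)
        (fun p => (p.1 + ((α : ℝ) : AddCircle (1 : ℝ)), T p.2 + h p.1)) :=
  skew_product_no_specification_general α T h

end Paper
end
end
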